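/- arXiv:1312.5932 — 2 statements merged into one kernel-verified Lean document; each statement's English description precedes it below -/
import Mathlib

section
/- Suppose the family {B_{m,n}} satisfies separated Weierstrass preparation in both kinds of variables. Then Weierstrass division in ξ_m holds: for all m ≥ 1, n ≥ 0, d ≥ 0, every f ∈ B_{m,n} regular in ξ_m of degree d, and every g ∈ B_{m,n}, there exist a unique q ∈ B_{m,n} and unique r_0,…,r_{d-1} ∈ B_{m-1,n} such that g = q·f + r_{d-1}ξ_m^{d-1} + ⋯ + r_1ξ_m + r_0. -/
noncomputable section
open scoped Classical
open MvPowerSeries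

namespace SCW

variable {B : Type*} [CommRing B]

/-- A variable of the two-kinds ambient: `Sum.inl i` is `ξ_{i+1}` and `Sum.inr j` is `ρ_{j+1}`.
`varOK m n v` says that the variable `v` is one of `ξ_1,…,ξ_m,ρ_1,…,ρ_n`. -/
def varOK (m n : ℕ) : ℕ ⊕ ℕ → Prop := Sum.elim (· < m) (· < n)

/-- The action of a permutation of the variables on a separated power series. -/
def permute2 (e : Equiv.Perm (ℕ ⊕ ℕ)) (f : MvPowerSeries (ℕ ⊕ ℕ) B) :
    MvPowerSeries (ℕ ⊕ ℕ) B :=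
  fun d => MvPowerSeries.coeff (Finsupp.equivMapDomain e d) f

/-- Coefficientwise reduction modulo the ideal `I`. -/
def red2 (I : Ideal B) : MvPowerSeries (ℕ ⊕ ℕ) B → MvPowerSeries (ℕ ⊕ ℕ) (B ⧸ I) :=
  MvPowerSeries.map (Ideal.Quotient.mk I)

/-- The coefficient series `f̄_{μν}` of `(ξ'')^μ(ρ'')^ν` when `f` is written as a series in the
variables `ξ_i (i > m), ρ_j (j > n)` with coefficients series in `ξ_1,…,ξ_m,ρ_1,…,ρ_n`. -/
def slice2 (m n : ℕ) (μ : (ℕ ⊕ ℕ) →₀ ℕ) (f : MvPowerSeries (ℕ ⊕ ℕ) B) :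
    MvPowerSeries (ℕ ⊕ ℕ) B :=
  fun d => if (∀ v ∈ d.support, varOK m n v) then MvPowerSeries.coeff (d + μ) f else 0

/-- The coefficient (a series in `ξ` only) of `ρ^μ` in `f`, viewing `f ∈ R[[ξ]][[ρ]]`. -/
def sliceRho {R : Type*} [CommRing R] (μ : ℕ →₀ ℕ) (f : MvPowerSeries (ℕ ⊕ ℕ) R) :
    MvPowerSeries (ℕ ⊕ ℕ) R :=
  fun d => if (∀ j : ℕ, d (Sum.inr j) = 0)
    then MvPowerSeries.coeff (d + μ.mapDomain Sum.inr) f else 0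

/-- `f` is (equal to) a polynomial in the `ξ`-variables only. -/
def IsPolyXi {R : Type*} [CommRing R] (f : MvPowerSeries (ℕ ⊕ ℕ) R) : Prop :=
  ∃ p : MvPolynomial (ℕ ⊕ ℕ) R, (∀ v ∈ p.vars, ∃ i : ℕ, v = Sum.inl i) ∧ f = ↑p

/-- A family `{B_{m,n}}` of subalgebras
`B[ξ_1,…,ξ_m,ρ_1,…,ρ_n] ⊆ B_{m,n} ⊆ B_{m',n'} ⊆ B[[ξ_1,…,ξ_{m'},ρ_1,…,ρ_{n'}]]`, closed under
permutations of the `ξ`'s and of the `ρ`'s, satisfying condition (*) (coefficients of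
`f ∈ B_{m',n'}` written as a series in `(ξ'',ρ'')` lie in `B_{m,n}`) and condition (**)
(`(B/I)[ξ,ρ] ⊆ B̃_{m,n} ⊆ (B/I)[ξ][[ρ]]`). -/
structure SepFamily (B : Type u) [CommRing B] (I : Ideal B) : Type u where
  Bmn : ℕ → ℕ → Subalgebra B (MvPowerSeries (ℕ ⊕ ℕ) B)
  mono : ∀ {m n m' n' : ℕ}, m ≤ m' → n ≤ n' → Bmn m n ≤ Bmn m' n'
  varsBelow : ∀ m n, ∀ f ∈ Bmn m n, ∀ d : (ℕ ⊕ ℕ) →₀ ℕ,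
    (∃ v ∈ d.support, ¬ varOK m n v) → MvPowerSeries.coeff d f = 0
  poly_mem : ∀ m n (p : MvPolynomial (ℕ ⊕ ℕ) B), (∀ v ∈ p.vars, varOK m n v) →
    (↑p : MvPowerSeries (ℕ ⊕ ℕ) B) ∈ Bmn m n
  permXi : ∀ m n (e : Equiv.Perm ℕ), (∀ i, m ≤ i → e i = i) →
    ∀ f ∈ Bmn m n, permute2 (Equiv.sumCongr e (Equiv.refl ℕ)) f ∈ Bmn m n
  permRho : ∀ m n (e : Equiv.Perm ℕ), (∀ j, n ≤ j → e j = j) →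
    ∀ f ∈ Bmn m n, permute2 (Equiv.sumCongr (Equiv.refl ℕ) e) f ∈ Bmn m n
  slice_mem : ∀ {m n m' n' : ℕ}, m ≤ m' → n ≤ n' → ∀ μ : (ℕ ⊕ ℕ) →₀ ℕ,
    (∀ v ∈ μ.support, ¬ varOK m n v) → ∀ f ∈ Bmn m' n', slice2 m n μ f ∈ Bmn m n
  red_upper : ∀ m n, ∀ f ∈ Bmn m n, ∀ μ : ℕ →₀ ℕ, IsPolyXi (sliceRho μ (red2 I f))
  red_lower : ∀ m n (q : MvPolynomial (ℕ ⊕ ℕ) (B ⧸ I)), (∀ v ∈ q.vars, varOK m n v) →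
    ∃ f ∈ Bmn m n, red2 I f = ↑q

/-- `f ∈ B_{m,n}` is regular in `ξ_m` of degree `d`: `f̃` mod `(ρ_1,…,ρ_n)` is a monic
polynomial in `ξ_m` of degree `d` (with lower coefficients in `(B/I)[ξ_1,…,ξ_{m-1}]`). -/
def SepRegXi (I : Ideal B) (m n d : ℕ) (f : MvPowerSeries (ℕ ⊕ ℕ) B) : Prop :=
  ∃ c : Fin d → MvPolynomial (ℕ ⊕ ℕ) (B ⧸ I),
    (∀ i, ∀ v ∈ (c i).vars, ∃ i' : ℕ, i' < m - 1 ∧ v = Sum.inl i') ∧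
    ∀ e : (ℕ ⊕ ℕ) →₀ ℕ, (∀ j : ℕ, j < n → e (Sum.inr j) = 0) →
      MvPowerSeries.coeff e (red2 I f) =
      MvPowerSeries.coeff e
        ↑((MvPolynomial.X (Sum.inl (m - 1)) : MvPolynomial (ℕ ⊕ ℕ) (B ⧸ I)) ^ d
          + ∑ i : Fin d, c i * (MvPolynomial.X (Sum.inl (m - 1))) ^ (i : ℕ))

/-- `f ∈ B_{m,n}` is regular in `ρ_n` of degree `d`:
`f̃ ≡ ρ_n^d mod (ρ_1,…,ρ_{n-1},ρ_n^{d+1})` in `(B/I)[ξ][[ρ]]`. -/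
def SepRegRho (I : Ideal B) (n d : ℕ) (f : MvPowerSeries (ℕ ⊕ ℕ) B) : Prop :=
  ∀ e : (ℕ ⊕ ℕ) →₀ ℕ, (∀ j : ℕ, j < n - 1 → e (Sum.inr j) = 0) →
    (∀ j : ℕ, n ≤ j → e (Sum.inr j) = 0) → e (Sum.inr (n - 1)) ≤ d →
    MvPowerSeries.coeff e (red2 I f) =
      if e = Finsupp.single (Sum.inr (n - 1)) d then 1 else 0

/-- Separated Weierstrass preparation in the variables of both kinds for `{B_{m,n}}`. -/
def SepHasWP {B : Type u} [CommRing B] {I : Ideal B} (ℬ : SepFamily B I) : Prop :=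
  (∀ m n d : ℕ, 1 ≤ m → ∀ f ∈ ℬ.Bmn m n, SepRegXi I m n d f →
    ∃! ur : MvPowerSeries (ℕ ⊕ ℕ) B × (Fin d → MvPowerSeries (ℕ ⊕ ℕ) B),
      ur.1 ∈ ℬ.Bmn m n ∧ (∃ v ∈ ℬ.Bmn m n, ur.1 * v = 1) ∧
      (∀ i, ur.2 i ∈ ℬ.Bmn (m - 1) n) ∧
      f = ur.1 * ((MvPowerSeries.X (Sum.inl (m - 1))) ^ d
        + ∑ i : Fin d, ur.2 i * (MvPowerSeries.X (Sum.inl (m - 1))) ^ (i : ℕ))) ∧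
  (∀ m n d : ℕ, 1 ≤ n → ∀ f ∈ ℬ.Bmn m n, SepRegRho I n d f →
    ∃! ur : MvPowerSeries (ℕ ⊕ ℕ) B × (Fin d → MvPowerSeries (ℕ ⊕ ℕ) B),
      ur.1 ∈ ℬ.Bmn m n ∧ (∃ v ∈ ℬ.Bmn m n, ur.1 * v = 1) ∧
      (∀ i, ur.2 i ∈ ℬ.Bmn m (n - 1)) ∧
      f = ur.1 * ((MvPowerSeries.X (Sum.inr (n - 1))) ^ d
        + ∑ i : Fin d, ur.2 i * (MvPowerSeries.X (Sum.inr (n - 1))) ^ (i : ℕ)))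

end SCW

/-!
Adjoin a fresh variable `t = ρ_{n+1}`. If `f = u·P` is the preparation of `f`, then
`f + t·u·g ∈ B_{m,n+1}` is still regular in `ξ_m`, so it has a preparation `U·Q`. Setting `t = 0`
and using uniqueness of the preparation of `f` gives `U|_{t=0} = u` and `Q|_{t=0} = P`; comparing
the coefficients of `t` then gives `u·g = (∂_t U)|_{t=0}·P + u·(∂_t Q)|_{t=0}`, which is a division
of `g` by `f`. Conversely, if `q·f + Σ r_i ξ_m^i = 0`, then
`((1 + t·q·u)·u)·P = u·(P - t·Σ r_i ξ_m^i)` are two preparations of `(1 + t·q·u)·f`,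
so `t·q = 0` and `t·r_i = 0`.
-/

namespace SCW

open Finsupp

variable {B : Type*} [CommRing B]

theorem varOK_mono {m m' n : ℕ} (hm : m' ≤ m) {v : ℕ ⊕ ℕ} (hv : varOK m' n v) : varOK m n v := by
  cases v <;> simp only [varOK, Sum.elim_inl, Sum.elim_inr] at hv ⊢ <;> omega

/-- Sets every variable other than `ξ_1,…,ξ_m,ρ_1,…,ρ_n` to zero. -/
def restrictVars (m n : ℕ) : MvPowerSeries (ℕ ⊕ ℕ) B →ₐ[B] MvPowerSeries (ℕ ⊕ ℕ) B :=
  (rename (Function.Embedding.subtype (varOK m n))).comp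
    (killCompl (Function.Embedding.subtype (varOK m n)))

theorem coeff_restrictVars (m n : ℕ) (f : MvPowerSeries (ℕ ⊕ ℕ) B) (x : (ℕ ⊕ ℕ) →₀ ℕ) :
    coeff x (restrictVars m n f) =
      if ∀ v ∈ x.support, varOK m n v then coeff x f else 0 := by
  set e := Function.Embedding.subtype (varOK m n)
  have hrange : (∀ v ∈ x.support, varOK m n v) ↔ x ∈ Set.range (embDomain e) := by
    rw [mem_range_embDomain_iff]
    simp [e, Set.subset_def]
  split_ifs with hx
  · obtain ⟨y, rfl⟩ := hrange.1 hx
    rw [restrictVars, AlgHom.comp_apply, coeff_embDomain_rename, coeff_killCompl]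
  · refine coeff_rename_eq_zero _ _ fun hmem => hx (hrange.2 ?_)
    rwa [← funext (embDomain_eq_mapDomain e)] at hmem

theorem coeff_slice2 (m n : ℕ) (μ x : (ℕ ⊕ ℕ) →₀ ℕ) (f : MvPowerSeries (ℕ ⊕ ℕ) B) :
    coeff x (slice2 m n μ f) =
      if ∀ v ∈ x.support, varOK m n v then coeff (x + μ) f else 0 := rfl

theorem slice2_zero (m n : ℕ) (f : MvPowerSeries (ℕ ⊕ ℕ) B) :
    slice2 m n 0 f = restrictVars m n f := by
  ext x
  rw [coeff_slice2, coeff_restrictVars, add_zero]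

theorem slice2_single_inr (m n : ℕ) (f : MvPowerSeries (ℕ ⊕ ℕ) B) :
    slice2 m n (single (Sum.inr n) 1) f = restrictVars m n (pderiv B (Sum.inr n) f) := by
  ext x
  rw [coeff_slice2, coeff_restrictVars, coeff_pderiv]
  split_ifs with hx
  · have hxn : x (Sum.inr n) = 0 := by
      by_contra h
      simpa [varOK] using hx _ (mem_support_iff.2 h)
    rw [hxn, Nat.cast_zero, zero_add, mul_one]
  · rfl

theorem coeff_X_mul_eq_zero {σ R : Type*} [Semiring R] {v : σ} {x : σ →₀ ℕ} (hx : x v = 0)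
    (g : MvPowerSeries σ R) : coeff x (X v * g) = 0 := by
  rw [X, coeff_monomial_mul, if_neg]
  intro hle
  have := single_le_iff.1 hle
  omega

theorem eq_zero_of_X_mul_eq_zero {σ R : Type*} [Semiring R] {v : σ} {g : MvPowerSeries σ R}
    (h : X v * g = 0) : g = 0 := by
  ext x
  have hx := congrArg (coeff (single v 1 + x)) h
  rwa [X, coeff_add_monomial_mul, one_mul, map_zero, ← map_zero (coeff x)] at hx

section Family

variable {I : Ideal B} (ℬ : SepFamily B I)

theorem SepFamily.X_mem {m n : ℕ} {v : ℕ ⊕ ℕ} (hv : varOK m n v) :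
    (X v : MvPowerSeries (ℕ ⊕ ℕ) B) ∈ ℬ.Bmn m n := by
  rw [← MvPolynomial.coe_X]
  refine ℬ.poly_mem m n _ fun w hw => ?_
  rw [MvPolynomial.vars_def, Multiset.mem_toFinset] at hw
  rwa [Multiset.mem_singleton.1 (Multiset.mem_of_le (MvPolynomial.degrees_X' v) hw)]

theorem SepFamily.restrictVars_of_mem {m n : ℕ} {f : MvPowerSeries (ℕ ⊕ ℕ) B}
    (hf : f ∈ ℬ.Bmn m n) : restrictVars m n f = f := by
  ext x
  rw [coeff_restrictVars, ite_eq_left_iff]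
  intro hx
  push Not at hx
  exact (ℬ.varsBelow m n f hf x hx).symm

theorem restrictVars_X_of_not_varOK {m n : ℕ} {v : ℕ ⊕ ℕ} (hv : ¬ varOK m n v) :
    restrictVars m n (X v : MvPowerSeries (ℕ ⊕ ℕ) B) = 0 := by
  rw [restrictVars, AlgHom.comp_apply, killCompl_X_eq_zero (by simpa using hv), map_zero]

theorem SepFamily.pderiv_of_mem {m n : ℕ} {f : MvPowerSeries (ℕ ⊕ ℕ) B} (hf : f ∈ ℬ.Bmn m n)
    {v : ℕ ⊕ ℕ} (hv : ¬ varOK m n v) : pderiv B v f = 0 := by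
  ext x
  rw [coeff_pderiv, ℬ.varsBelow m n f hf _ ⟨v, by simp, hv⟩, zero_mul, map_zero]

theorem SepFamily.slice2_eq_of_mem {m m' n n' : ℕ} (hm : m' ≤ m) (μ : (ℕ ⊕ ℕ) →₀ ℕ)
    {f : MvPowerSeries (ℕ ⊕ ℕ) B} (hf : f ∈ ℬ.Bmn m' n') :
    slice2 m n μ f = slice2 m' n μ f := by
  ext x
  rw [coeff_slice2, coeff_slice2]
  by_cases hx' : ∀ v ∈ x.support, varOK m' n v
  · rw [if_pos hx', if_pos fun v hv => varOK_mono hm (hx' v hv)]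
  · rw [if_neg hx']
    split_ifs with hx
    · push Not at hx'
      obtain ⟨v, hv, hbad⟩ := hx'
      refine ℬ.varsBelow _ _ f hf _ ⟨v, by simp_all, fun hgood => hbad ?_⟩
      cases v <;> simp_all [varOK]
    · rfl

theorem SepFamily.slice2_mem {m m' n n' : ℕ} (hm : m' ≤ m) (hn : n ≤ n')
    {μ : (ℕ ⊕ ℕ) →₀ ℕ} (hμ : ∀ v ∈ μ.support, ¬ varOK m n v)
    {f : MvPowerSeries (ℕ ⊕ ℕ) B} (hf : f ∈ ℬ.Bmn m' n') : slice2 m n μ f ∈ ℬ.Bmn m' n := by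
  rw [ℬ.slice2_eq_of_mem hm μ hf]
  exact ℬ.slice_mem le_rfl hn μ (fun v hv h => hμ v hv (varOK_mono hm h)) f hf

theorem SepFamily.restrictVars_mem {m m' n n' : ℕ} (hm : m' ≤ m) (hn : n ≤ n')
    {f : MvPowerSeries (ℕ ⊕ ℕ) B} (hf : f ∈ ℬ.Bmn m' n') : restrictVars m n f ∈ ℬ.Bmn m' n := by
  simpa only [slice2_zero] using ℬ.slice2_mem (μ := 0) hm hn (by simp) hf

theorem SepFamily.restrictVars_pderiv_mem {m m' n n' : ℕ} (hm : m' ≤ m) (hn : n ≤ n')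
    {f : MvPowerSeries (ℕ ⊕ ℕ) B} (hf : f ∈ ℬ.Bmn m' n') :
    restrictVars m n (pderiv B (Sum.inr n) f) ∈ ℬ.Bmn m' n := by
  simpa only [slice2_single_inr] using
    ℬ.slice2_mem (μ := single (Sum.inr n) 1) hm hn (by simp [varOK]) hf

end Family

/-- `r_{d-1} ξ_{k+1}^{d-1} + ⋯ + r_1 ξ_{k+1} + r_0`, as `Sum.inl k` is the variable `ξ_{k+1}`. -/
def xiPoly {d : ℕ} (k : ℕ) (r : Fin d → MvPowerSeries (ℕ ⊕ ℕ) B) : MvPowerSeries (ℕ ⊕ ℕ) B :=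
  ∑ i : Fin d, r i * X (Sum.inl k) ^ (i : ℕ)

theorem xiPoly_sub {d : ℕ} (k : ℕ) (r s : Fin d → MvPowerSeries (ℕ ⊕ ℕ) B) :
    xiPoly k (r - s) = xiPoly k r - xiPoly k s := by
  simp only [xiPoly, Pi.sub_apply, sub_mul, Finset.sum_sub_distrib]

theorem xiPoly_smul {d : ℕ} (k : ℕ) (c : MvPowerSeries (ℕ ⊕ ℕ) B)
    (r : Fin d → MvPowerSeries (ℕ ⊕ ℕ) B) : xiPoly k (c • r) = c * xiPoly k r := by
  simp only [xiPoly, Pi.smul_apply, smul_eq_mul, Finset.mul_sum, mul_assoc]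

theorem map_xiPoly {d : ℕ} (k : ℕ) (φ : MvPowerSeries (ℕ ⊕ ℕ) B →ₐ[B] MvPowerSeries (ℕ ⊕ ℕ) B)
    (hφ : φ (X (Sum.inl k)) = X (Sum.inl k)) (r : Fin d → MvPowerSeries (ℕ ⊕ ℕ) B) :
    φ (xiPoly k r) = xiPoly k (φ ∘ r) := by
  simp only [xiPoly, map_sum, map_mul, map_pow, hφ, Function.comp_apply]

theorem pderiv_xiPoly {d : ℕ} (k : ℕ) {v : ℕ ⊕ ℕ} (hv : v ≠ Sum.inl k)
    (r : Fin d → MvPowerSeries (ℕ ⊕ ℕ) B) :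
    pderiv B v (xiPoly k r) = xiPoly k (pderiv B v ∘ r) := by
  rw [xiPoly, xiPoly, map_sum]
  refine Finset.sum_congr rfl fun i _ => ?_
  rw [Derivation.leibniz, pderiv_pow, pderiv_X_of_ne hv.symm, mul_zero, smul_zero, zero_add,
    smul_eq_mul, mul_comm, Function.comp_apply]

theorem sepRegXi_one (I : Ideal B) (m n : ℕ) : SepRegXi I m n 0 (1 : MvPowerSeries (ℕ ⊕ ℕ) B) :=
  ⟨Fin.elim0, fun i => i.elim0, fun e _ => by simp [red2]⟩

theorem SepRegXi.add_X_inr_mul {I : Ideal B} {m n d : ℕ} {f : MvPowerSeries (ℕ ⊕ ℕ) B}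
    (hf : SepRegXi I m n d f) (g : MvPowerSeries (ℕ ⊕ ℕ) B) :
    SepRegXi I m (n + 1) d (f + X (Sum.inr n) * g) := by
  obtain ⟨c, hc, hfc⟩ := hf
  refine ⟨c, hc, fun e he => ?_⟩
  rw [red2, map_add, map_mul, map_X, map_add, coeff_X_mul_eq_zero (he n n.lt_succ_self), add_zero]
  exact hfc e fun j hj => he j (Nat.lt_succ_of_lt hj)

def HasPrepXi {I : Ideal B} (ℬ : SepFamily B I) : Prop :=
  ∀ m n d : ℕ, 1 ≤ m → ∀ f ∈ ℬ.Bmn m n, SepRegXi I m n d f →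
    ∃! ur : MvPowerSeries (ℕ ⊕ ℕ) B × (Fin d → MvPowerSeries (ℕ ⊕ ℕ) B),
      ur.1 ∈ ℬ.Bmn m n ∧ (∃ v ∈ ℬ.Bmn m n, ur.1 * v = 1) ∧
      (∀ i, ur.2 i ∈ ℬ.Bmn (m - 1) n) ∧
      f = ur.1 * (X (Sum.inl (m - 1)) ^ d + xiPoly (m - 1) ur.2)

section Division

variable {I : Ideal B} {ℬ : SepFamily B I} {m n d : ℕ} {f : MvPowerSeries (ℕ ⊕ ℕ) B}

theorem HasPrepXi.exists_mul_eq_one (hP : HasPrepXi ℬ) (hm : 1 ≤ m) (hf : f ∈ ℬ.Bmn m n)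
    (hreg : SepRegXi I m n 0 f) : ∃ w ∈ ℬ.Bmn m n, f * w = 1 := by
  obtain ⟨⟨u, r⟩, ⟨-, ⟨w, hw, huw⟩, -, hfu⟩, -⟩ := hP m n 0 hm f hf hreg
  refine ⟨w, hw, ?_⟩
  rwa [hfu, pow_zero, xiPoly, Finset.univ_eq_empty, Finset.sum_empty, add_zero, mul_one]

theorem HasPrepXi.exists_div (hP : HasPrepXi ℬ) (hm : 1 ≤ m) (hf : f ∈ ℬ.Bmn m n)
    (hreg : SepRegXi I m n d f) {g : MvPowerSeries (ℕ ⊕ ℕ) B} (hg : g ∈ ℬ.Bmn m n) :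
    ∃ q ∈ ℬ.Bmn m n, ∃ r : Fin d → MvPowerSeries (ℕ ⊕ ℕ) B,
      (∀ i, r i ∈ ℬ.Bmn (m - 1) n) ∧ g = q * f + xiPoly (m - 1) r := by
  obtain ⟨⟨u, s⟩, ⟨hu, ⟨v, hv, huv⟩, hs, hfus⟩, huniq⟩ := hP m n d hm f hf hreg
  have hξ : varOK m n (Sum.inl (m - 1)) := by simp only [varOK, Sum.elim_inl]; omega
  have ht : ¬ varOK m n (Sum.inr n) := by simp [varOK]
  have hn : n ≤ n + 1 := n.le_succ
  have hh : f + X (Sum.inr n) * (u * g) ∈ ℬ.Bmn m (n + 1) :=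
    add_mem (ℬ.mono le_rfl hn hf)
      (mul_mem (ℬ.X_mem (by simp [varOK])) (ℬ.mono le_rfl hn (mul_mem hu hg)))
  obtain ⟨⟨U, R⟩, ⟨hU, ⟨W, hW, hUW⟩, hR, hUR⟩, -⟩ :=
    hP m (n + 1) d hm _ hh (hreg.add_X_inr_mul _)
  set π := restrictVars (B := B) m n
  have hπξ : π (X (Sum.inl (m - 1))) = X (Sum.inl (m - 1)) := ℬ.restrictVars_of_mem (ℬ.X_mem hξ)
  have hπt : π (X (Sum.inr n)) = 0 := restrictVars_X_of_not_varOK ht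
  have hconst : (π U, π ∘ R) = (u, s) := by
    refine huniq _ ⟨ℬ.restrictVars_mem le_rfl hn hU,
      ⟨π W, ℬ.restrictVars_mem le_rfl hn hW, by rw [← map_mul, hUW, map_one]⟩,
      fun i => ℬ.restrictVars_mem (Nat.sub_le m 1) hn (hR i), ?_⟩
    have := congrArg π hUR
    rwa [map_add, map_mul, hπt, zero_mul, add_zero, ℬ.restrictVars_of_mem hf, map_mul, map_add,
      map_pow, hπξ, map_xiPoly _ _ hπξ] at this
  obtain ⟨hπU, hπR⟩ := Prod.mk.inj hconst
  have hπu : π u = u := ℬ.restrictVars_of_mem hu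
  have hπg : π g = g := ℬ.restrictVars_of_mem hg
  have hlin : u * g = π (pderiv B (Sum.inr n) U) * (X (Sum.inl (m - 1)) ^ d + xiPoly (m - 1) s)
      + u * xiPoly (m - 1) (π ∘ pderiv B (Sum.inr n) ∘ R) := by
    have := congrArg (fun F => π (pderiv B (Sum.inr n) F)) hUR
    simp only [map_add, Derivation.leibniz, smul_eq_mul, map_mul, map_pow, map_zero, map_one,
      ℬ.pderiv_of_mem hf ht, pderiv_X_self, pderiv_pow, pderiv_X_of_ne Sum.inl_ne_inr,
      pderiv_xiPoly _ Sum.inr_ne_inl, map_xiPoly _ _ hπξ, hπt, hπξ, hπU, hπR, hπu, hπg,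
      mul_zero, zero_mul] at this
    linear_combination this
  set δU := π (pderiv B (Sum.inr n) U)
  set δR := π ∘ pderiv B (Sum.inr n) ∘ R
  set P := X (Sum.inl (m - 1)) ^ d + xiPoly (m - 1) s
  refine ⟨v * δU * v, mul_mem (mul_mem hv (ℬ.restrictVars_pderiv_mem le_rfl hn hU)) hv,
    δR, fun i => ℬ.restrictVars_pderiv_mem (Nat.sub_le m 1) hn (hR i), ?_⟩
  linear_combination v * hlin - v * δU * v * hfus + (xiPoly (m - 1) δR - g - v * δU * P) * huv

theorem HasPrepXi.eq_zero_of_mul_add_xiPoly_eq_zero (hP : HasPrepXi ℬ) (hm : 1 ≤ m)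
    (hf : f ∈ ℬ.Bmn m n) (hreg : SepRegXi I m n d f) {q : MvPowerSeries (ℕ ⊕ ℕ) B}
    (hq : q ∈ ℬ.Bmn m n) {r : Fin d → MvPowerSeries (ℕ ⊕ ℕ) B}
    (hr : ∀ i, r i ∈ ℬ.Bmn (m - 1) n) (hqr : q * f + xiPoly (m - 1) r = 0) : q = 0 ∧ r = 0 := by
  obtain ⟨⟨u, s⟩, ⟨hu, ⟨v, hv, huv⟩, hs, hfus⟩, -⟩ := hP m n d hm f hf hreg
  set t : MvPowerSeries (ℕ ⊕ ℕ) B := X (Sum.inr n)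
  have hn : n ≤ n + 1 := n.le_succ
  have ht : ∀ k, t ∈ ℬ.Bmn k (n + 1) := fun k => ℬ.X_mem (by simp [varOK])
  have ha : 1 + t * (q * u) ∈ ℬ.Bmn m (n + 1) :=
    add_mem (one_mem _) (mul_mem (ht m) (ℬ.mono le_rfl hn (mul_mem hq hu)))
  obtain ⟨w, hw, haw⟩ := hP.exists_mul_eq_one hm ha ((sepRegXi_one I m n).add_X_inr_mul _)
  have hreg' : SepRegXi I m (n + 1) d ((1 + t * (q * u)) * f) := by
    rw [show (1 + t * (q * u)) * f = f + t * (q * u * f) by ring]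
    exact hreg.add_X_inr_mul _
  have key := (hP m (n + 1) d hm _ (mul_mem ha (ℬ.mono le_rfl hn hf)) hreg').unique
    (y₁ := ((1 + t * (q * u)) * u, s)) (y₂ := (u, s - t • r))
    ⟨mul_mem ha (ℬ.mono le_rfl hn hu),
      ⟨w * v, mul_mem hw (ℬ.mono le_rfl hn hv), by linear_combination (u * v) * haw + huv⟩,
      fun i => ℬ.mono le_rfl hn (hs i), by rw [hfus]; ring⟩
    ⟨ℬ.mono le_rfl hn hu, ⟨v, ℬ.mono le_rfl hn hv, huv⟩,
      fun i => sub_mem (ℬ.mono le_rfl hn (hs i)) (mul_mem (ht _) (ℬ.mono le_rfl hn (hr i))),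
      by rw [xiPoly_sub, xiPoly_smul]; linear_combination hfus + t * u * hqr⟩
  obtain ⟨hau, hsr⟩ := Prod.mk.inj key
  have hquu : q * u * u = 0 := eq_zero_of_X_mul_eq_zero (by linear_combination hau)
  have htr : t • r = 0 := sub_eq_self.1 hsr.symm
  exact ⟨by linear_combination (v * v) * hquu - q * (1 + u * v) * huv,
    funext fun i => eq_zero_of_X_mul_eq_zero (congrFun htr i)⟩

end Division

end SCW

open SCW in
theorem stmt1_general {B : Type u} [CommRing B] (I : Ideal B)
    (ℬ : SepFamily B I) (hWP : SepHasWP ℬ) :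
    ∀ m n d : ℕ, 1 ≤ m → ∀ f ∈ ℬ.Bmn m n, SepRegXi I m n d f → ∀ g ∈ ℬ.Bmn m n,
      ∃! qr : MvPowerSeries (ℕ ⊕ ℕ) B × (Fin d → MvPowerSeries (ℕ ⊕ ℕ) B),
        qr.1 ∈ ℬ.Bmn m n ∧ (∀ i, qr.2 i ∈ ℬ.Bmn (m - 1) n) ∧
        g = qr.1 * f + ∑ i : Fin d, qr.2 i * (MvPowerSeries.X (Sum.inl (m - 1))) ^ (i : ℕ) := by
  intro m n d hm f hf hreg g hg
  have hP : HasPrepXi ℬ := hWP.1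
  obtain ⟨q, hq, r, hr, hgqr⟩ := hP.exists_div hm hf hreg hg
  refine ⟨(q, r), ⟨hq, hr, hgqr⟩, ?_⟩
  rintro ⟨q', r'⟩ ⟨hq', hr', hgqr' : g = q' * f + xiPoly (m - 1) r'⟩
  obtain ⟨hqq, hrr⟩ := hP.eq_zero_of_mul_add_xiPoly_eq_zero (r := r' - r) hm hf hreg
    (sub_mem hq' hq) (fun i => sub_mem (hr' i) (hr i))
    (by rw [xiPoly_sub]; linear_combination hgqr - hgqr')
  exact Prod.ext (sub_eq_zero.1 hqq) (sub_eq_zero.1 hrr)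

open SCW in
/-- separated Weierstrass preparation implies Weierstrass division in `ξ_m`. -/
theorem stmt1 {B : Type u} [CommRing B] (I : Ideal B) (hI : I ≠ ⊤)
    (ℬ : SepFamily B I) (hWP : SepHasWP ℬ) :
    ∀ m n d : ℕ, 1 ≤ m → ∀ f ∈ ℬ.Bmn m n, SepRegXi I m n d f → ∀ g ∈ ℬ.Bmn m n,
      ∃! qr : MvPowerSeries (ℕ ⊕ ℕ) B × (Fin d → MvPowerSeries (ℕ ⊕ ℕ) B),
        qr.1 ∈ ℬ.Bmn m n ∧ (∀ i, qr.2 i ∈ ℬ.Bmn (m - 1) n) ∧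
        g = qr.1 * f + ∑ i : Fin d, qr.2 i * (MvPowerSeries.X (Sum.inl (m - 1))) ^ (i : ℕ) :=
  stmt1_general I ℬ hWP
end
end

section
/- Let R be a commutative ring equipped with a function ‖·‖ : R → ℝ_{≥0} such that ‖x‖ = 0 if and only if x = 0, ‖x·y‖ ≤ ‖x‖·‖y‖ for all x,y, and ‖x+y‖ ≤ max(‖x‖,‖y‖) for all x,y (a nonarchimedean submultiplicative norm). Let N ≥ 1 and let elements d_{jα}, e_{jαβ} ∈ R (for 1 ≤ j,α,β ≤ N) satisfy ‖d_{jα}‖ < 1 and ‖e_{jαβ}‖ ≤ 1. If μ = (μ_1,…,μ_N) ∈ R^N satisfies ‖μ_α‖ < 1 for all α and μ_j = Σ_{α} d_{jα}μ_α + Σ_{α,β} e_{jαβ}μ_αμ_β for every j, then μ_j = 0 for all j. -/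
/-!
Let `M` be the largest of the norms `‖μ_α‖` and suppose `M > 0`. Every linear term
`d_{jα} μ_α` has norm at most `‖d_{jα}‖ M < M`, and every quadratic term has norm at most
`M² < M` because `M < 1`; by the ultrametric inequality the right-hand side of the equation for
an index `j` with `‖μ_j‖ = M` then has norm `< M`, a contradiction.
-/

lemma IsNonarchimedean.apply_sum_lt {R α β : Type*} [LinearOrder R] [AddCommMonoid α]
    {f : α → R} (hf : IsNonarchimedean f) {s : Finset β} {g : β → α} {B : R} (h0 : f 0 < B)
    (h : ∀ i ∈ s, f (g i) < B) : f (∑ i ∈ s, g i) < B := by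
  rcases s.eq_empty_or_nonempty with rfl | hs
  · simpa using h0
  · obtain ⟨i, hi, hle⟩ := hf.finset_image_add_of_nonempty g hs
    exact hle.trans_lt (h i hi)

section LinearAddQuadratic

variable {R ι : Type*} [CommRing R] [Fintype ι] {nr : R → ℝ}

lemma apply_linear_add_quadratic_lt (hnonneg : ∀ x, 0 ≤ nr x) (hzero : nr 0 = 0)
    (hmul : ∀ x y, nr (x * y) ≤ nr x * nr y) (hna : IsNonarchimedean nr)
    {d : ι → R} {e : ι → ι → R} (hd : ∀ α, nr (d α) < 1) (he : ∀ α β, nr (e α β) ≤ 1)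
    {μ : ι → R} {M : ℝ} (hM : 0 < M) (hM1 : M < 1) (hμ : ∀ α, nr (μ α) ≤ M) :
    nr ((∑ α, d α * μ α) + ∑ α, ∑ β, e α β * μ α * μ β) < M := by
  have hzero_lt : nr 0 < M := hzero ▸ hM
  have linear_lt : ∀ α, nr (d α * μ α) < M := fun α =>
    calc nr (d α * μ α) ≤ nr (d α) * nr (μ α) := hmul _ _
      _ ≤ nr (d α) * M := mul_le_mul_of_nonneg_left (hμ α) (hnonneg _)
      _ < 1 * M := mul_lt_mul_of_pos_right (hd α) hM
      _ = M := one_mul M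
  have quadratic_lt : ∀ α β, nr (e α β * μ α * μ β) < M := fun α β =>
    calc nr (e α β * μ α * μ β) ≤ nr (e α β) * nr (μ α) * nr (μ β) :=
          (hmul _ _).trans (mul_le_mul_of_nonneg_right (hmul _ _) (hnonneg _))
      _ ≤ 1 * M * M := by gcongr <;> simp only [he, hμ, hnonneg]
      _ < M := by nlinarith
  refine (hna _ _).trans_lt (max_lt ?_ ?_)
  · exact hna.apply_sum_lt hzero_lt fun α _ => linear_lt α
  · exact hna.apply_sum_lt hzero_lt fun α _ =>
      hna.apply_sum_lt hzero_lt fun β _ => quadratic_lt α β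

theorem eq_zero_of_eq_linear_add_quadratic (hnonneg : ∀ x, 0 ≤ nr x)
    (hzero : ∀ x, nr x = 0 ↔ x = 0) (hmul : ∀ x y, nr (x * y) ≤ nr x * nr y)
    (hna : IsNonarchimedean nr) {d : ι → ι → R} {e : ι → ι → ι → R}
    (hd : ∀ j α, nr (d j α) < 1) (he : ∀ j α β, nr (e j α β) ≤ 1)
    {μ : ι → R} (hμ : ∀ α, nr (μ α) < 1)
    (heq : ∀ j, μ j = (∑ α, d j α * μ α) + ∑ α, ∑ β, e j α β * μ α * μ β) (j : ι) :
    μ j = 0 := by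
  have : Nonempty ι := ⟨j⟩
  obtain ⟨j₀, hj₀⟩ := Finite.exists_max fun α => nr (μ α)
  suffices hM : nr (μ j₀) = 0 from (hzero _).mp (le_antisymm (hM ▸ hj₀ j) (hnonneg _))
  by_contra hM
  have hM_pos : 0 < nr (μ j₀) := (hnonneg _).lt_of_ne' hM
  have hrhs_lt := apply_linear_add_quadratic_lt hnonneg ((hzero 0).mpr rfl) hmul hna (hd j₀) (he j₀)
    hM_pos (hμ j₀) hj₀
  exact hrhs_lt.ne (congrArg nr (heq j₀)).symm

end LinearAddQuadratic

theorem stmt14_general {R : Type u} [CommRing R] (nr : R → ℝ)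
    (hnonneg : ∀ x, 0 ≤ nr x)
    (hzero : ∀ x, nr x = 0 ↔ x = 0)
    (hmul : ∀ x y, nr (x * y) ≤ nr x * nr y)
    (hadd : ∀ x y, nr (x + y) ≤ max (nr x) (nr y))
    (N : ℕ)
    (d : Fin N → Fin N → R) (e : Fin N → Fin N → Fin N → R)
    (hd : ∀ j α, nr (d j α) < 1) (he : ∀ j α β, nr (e j α β) ≤ 1)
    (μ : Fin N → R) (hμ : ∀ α, nr (μ α) < 1)
    (heq : ∀ j, μ j = (∑ α, d j α * μ α) + ∑ α, ∑ β, e j α β * μ α * μ β) :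
    ∀ j, μ j = 0 :=
  eq_zero_of_eq_linear_add_quadratic hnonneg hzero hmul hadd hd he hμ heq

/-- in a commutative ring with a nonarchimedean submultiplicative norm, a
system in which each unknown equals a linear combination of the unknowns with coefficients of
norm `< 1` plus a quadratic expression with coefficients of norm `≤ 1` has no nonzero solution
all of whose entries have norm `< 1`. -/
theorem stmt14 {R : Type u} [CommRing R] (nr : R → ℝ)
    (hnonneg : ∀ x, 0 ≤ nr x)
    (hzero : ∀ x, nr x = 0 ↔ x = 0)
    (hmul : ∀ x y, nr (x * y) ≤ nr x * nr y)
    (hadd : ∀ x y, nr (x + y) ≤ max (nr x) (nr y))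
    (N : ℕ) (hN : 1 ≤ N)
    (d : Fin N → Fin N → R) (e : Fin N → Fin N → Fin N → R)
    (hd : ∀ j α, nr (d j α) < 1) (he : ∀ j α β, nr (e j α β) ≤ 1)
    (μ : Fin N → R) (hμ : ∀ α, nr (μ α) < 1)
    (heq : ∀ j, μ j = (∑ α, d j α * μ α) + ∑ α, ∑ β, e j α β * μ α * μ β) :
    ∀ j, μ j = 0 :=
  stmt14_general nr hnonneg hzero hmul hadd N d e hd he μ hμ heq
end
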